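/- Let A be a finite-dimensional semisimple algebra over a field of characteristic zero (hence separable), and E an A-bimodule. Then for every n ≥ 0 the Hochschild coboundary map Cⁿ(A,E) → Z^{n+1}(A,E) is surjective; equivalently, the Hochschild cohomology H^{n+1}(A,E) vanishes for n ≥ 0. -/

import Mathlib

/-!
The regular trace form `(x, y) ↦ tr (z ↦ x * y * z)` of a finite-dimensional semisimple algebra
in characteristic zero is nondegenerate: its radical is an ideal, hence generated by an idempotent
`e`, and the trace of the projection `z ↦ e * z` is its rank, which vanishes only if `e = 0`.
Dual bases `(x i)`, `(y i)` for this form give a separability idempotent `e = ∑ i, x i ⊗ y i`,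
i.e. `∑ i, x i * y i = 1` and `c * e = e * c`. The contraction
`s f (a₁, …, aₙ) = ∑ i, x i • f (y i, a₁, …, aₙ)` is then a contracting homotopy,
`δ s + s δ = id` on multilinear cochains of positive degree, so every cocycle `a` is `δ (s a)`.
-/

/-- The Hochschild coboundary operator on (not necessarily multilinear) `n`-cochains
`Aⁿ → E`, for an `A`-bimodule `E` (the right action being encoded as an action of
`Aᵐᵒᵖ`). -/
def hochschildCoboundary {A E : Type*} [Ring A] [AddCommGroup E]
    [Module A E] [Module Aᵐᵒᵖ E]
    (n : ℕ) (f : (Fin n → A) → E) : (Fin (n + 1) → A) → E :=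
  fun a =>
    a 0 • f (fun i => a i.succ)
      + (Finset.range n).sum (fun i =>
          (-1 : ℤ) ^ (i + 1) • f (fun j =>
            if (j : ℕ) < i then a (Fin.castSucc j)
            else if (j : ℕ) = i then a (Fin.castSucc j) * a j.succ
            else a j.succ))
      + (-1 : ℤ) ^ (n + 1) •
          (MulOpposite.op (a (Fin.last n)) • f (fun j => a (Fin.castSucc j)))

open TensorProduct

namespace Algebra

variable (k A : Type*) [CommSemiring k] [Semiring A] [Algebra k A]

noncomputable def regularTrace : A →ₗ[k] k :=
  LinearMap.trace k A ∘ₗ (Algebra.lmul k A).toLinearMap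

noncomputable def regularTraceForm : LinearMap.BilinForm k A :=
  (LinearMap.mul k A).compr₂ (regularTrace k A)

variable {k A}

@[simp]
theorem regularTraceForm_apply (x y : A) : regularTraceForm k A x y = regularTrace k A (x * y) :=
  rfl

theorem regularTrace_mul_comm (x y : A) :
    regularTrace k A (x * y) = regularTrace k A (y * x) := by
  simp only [regularTrace, LinearMap.coe_comp, Function.comp_apply, AlgHom.toLinearMap_apply,
    map_mul, LinearMap.trace_mul_comm]

theorem regularTraceForm_isSymm : (regularTraceForm k A).IsSymm :=
  ⟨fun x y => by simp only [regularTraceForm_apply, regularTrace_mul_comm]⟩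

def regularTraceFormRadical : Ideal A where
  carrier := {z | ∀ c, regularTrace k A (z * c) = 0}
  add_mem' ha hb c := by simp only [add_mul, map_add, ha c, hb c, add_zero]
  zero_mem' c := by simp
  smul_mem' r z hz c := by
    rw [smul_eq_mul, mul_assoc, regularTrace_mul_comm, mul_assoc, hz]

end Algebra

open Algebra

theorem IsIdempotentElem.eq_zero_of_regularTrace_eq_zero {k A : Type*} [Field k] [CharZero k]
    [Ring A] [Algebra k A] [FiniteDimensional k A] {e : A} (he : IsIdempotentElem e)
    (h : regularTrace k A e = 0) : e = 0 := by
  have hlmul : Algebra.lmul k A e = 0 :=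
    LinearMap.IsIdempotentElem.eq_zero_of_trace_eq_zero (he.map (Algebra.lmul k A)) h
  simpa using congr($hlmul 1)

theorem Algebra.regularTraceForm_nondegenerate {k A : Type*} [Field k] [CharZero k] [Ring A]
    [Algebra k A] [FiniteDimensional k A] [IsSemisimpleRing A] :
    (regularTraceForm k A).Nondegenerate := by
  refine (LinearMap.IsRefl.nondegenerate_iff_separatingLeft
    (B := regularTraceForm k A) regularTraceForm_isSymm.isRefl).mpr fun w hw => ?_
  obtain ⟨e, he, hspan⟩ :=
    IsSemisimpleRing.ideal_eq_span_idempotent (regularTraceFormRadical (k := k) (A := A))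
  have he_mem : e ∈ regularTraceFormRadical := hspan ▸ Ideal.mem_span_singleton_self e
  have he0 : e = 0 := he.eq_zero_of_regularTrace_eq_zero (by simpa using he_mem 1)
  have hw_mem : w ∈ regularTraceFormRadical := hw
  simpa [hspan, he0] using hw_mem

/-- The family encodes the separability idempotent `e = ∑ i, x i ⊗ y i ∈ A ⊗[k] A`. -/
structure IsSeparabilityIdempotent (k : Type*) {A ι : Type*} [CommSemiring k] [Semiring A]
    [Algebra k A] [Fintype ι] (x y : ι → A) : Prop where
  sum_mul_eq_one : ∑ i, x i * y i = 1
  sum_mul_tmul_eq : ∀ c : A, ∑ i, (c * x i) ⊗ₜ[k] y i = ∑ i, x i ⊗ₜ[k] (y i * c)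

theorem IsSeparabilityIdempotent.sum_apply_mul_eq {k A ι M : Type*} [CommSemiring k] [Semiring A]
    [Algebra k A] [Fintype ι] [AddCommMonoid M] [Module k M] {x y : ι → A}
    (he : IsSeparabilityIdempotent k x y) (φ : A →ₗ[k] A →ₗ[k] M) (c : A) :
    ∑ i, φ (c * x i) (y i) = ∑ i, φ (x i) (y i * c) := by
  simpa only [map_sum, TensorProduct.lift.tmul] using
    congr(TensorProduct.lift φ $(he.sum_mul_tmul_eq c))

namespace Algebra

open Module LinearMap.BilinForm

variable {k A ι : Type*} [Field k] [CharZero k] [Ring A] [Algebra k A] [FiniteDimensional k A]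
  [IsSemisimpleRing A] [Fintype ι] [DecidableEq ι] (b : Basis ι k A)

noncomputable def traceDualBasis : Basis ι k A :=
  (regularTraceForm k A).dualBasis regularTraceForm_nondegenerate b

theorem traceDualBasis_repr_apply (w : A) (i : ι) :
    (traceDualBasis b).repr w i = regularTrace k A (w * b i) :=
  dualBasis_repr_apply _ _ _ _

theorem repr_apply_eq_regularTrace_mul_traceDualBasis (w : A) (i : ι) :
    b.repr w i = regularTrace k A (w * traceDualBasis b i) := by
  conv_lhs => rw [← dualBasis_dualBasis regularTraceForm_nondegenerate regularTraceForm_isSymm b]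
  exact dualBasis_repr_apply _ _ _ _

theorem sum_traceDualBasis_mul : ∑ i, traceDualBasis b i * b i = 1 := by
  have h (c : A) : regularTraceForm k A (∑ i, traceDualBasis b i * b i) c
      = regularTraceForm k A 1 c := by
    -- both sides are the trace of `z ↦ c * z`, computed in the basis `traceDualBasis b`
    calc regularTraceForm k A (∑ i, traceDualBasis b i * b i) c
        = ∑ i, (traceDualBasis b).repr (c * traceDualBasis b i) i := by
          simp only [map_sum, LinearMap.sum_apply, traceDualBasis_repr_apply,
            regularTraceForm_apply]
          exact Finset.sum_congr rfl fun i _ => by rw [regularTrace_mul_comm, mul_assoc]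
      _ = regularTraceForm k A 1 c := by
          rw [regularTraceForm_apply, one_mul, regularTrace, LinearMap.comp_apply,
            LinearMap.trace_eq_matrix_trace k (traceDualBasis b), Matrix.trace]
          simp [LinearMap.toMatrix_apply]
  exact sub_eq_zero.mp <| (regularTraceForm_nondegenerate (k := k) (A := A)).1 _ fun c => by
    rw [map_sub, LinearMap.sub_apply, h, sub_self]

theorem sum_mul_traceDualBasis_tmul (c : A) :
    ∑ i, (c * traceDualBasis b i) ⊗ₜ[k] b i
      = ∑ i, traceDualBasis b i ⊗ₜ[k] (b i * c) := by
  calc ∑ i, (c * traceDualBasis b i) ⊗ₜ[k] b i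
      = ∑ i, (∑ j, (traceDualBasis b).repr (c * traceDualBasis b i) j • traceDualBasis b j)
          ⊗ₜ[k] b i := by
        simp_rw [Basis.sum_repr]
    _ = ∑ j, ∑ i, regularTrace k A (b j * c * traceDualBasis b i)
          • (traceDualBasis b j ⊗ₜ[k] b i) := by
        simp_rw [TensorProduct.sum_tmul, ← TensorProduct.smul_tmul', traceDualBasis_repr_apply]
        rw [Finset.sum_comm]
        refine Finset.sum_congr rfl fun j _ => Finset.sum_congr rfl fun i _ => ?_
        rw [regularTrace_mul_comm, ← mul_assoc]
    _ = ∑ j, traceDualBasis b j ⊗ₜ[k] (∑ i, b.repr (b j * c) i • b i) := by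
        simp_rw [TensorProduct.tmul_sum, TensorProduct.tmul_smul,
          repr_apply_eq_regularTrace_mul_traceDualBasis]
    _ = ∑ j, traceDualBasis b j ⊗ₜ[k] (b j * c) := by
        simp_rw [b.sum_repr]

theorem isSeparabilityIdempotent_traceDualBasis :
    IsSeparabilityIdempotent k (traceDualBasis b) b :=
  ⟨sum_traceDualBasis_mul b, sum_mul_traceDualBasis_tmul b⟩

end Algebra

theorem Fin.init_cons {α : Type*} {n : ℕ} (c : α) (w : Fin (n + 1) → α) :
    Fin.init (Fin.cons c w : Fin (n + 2) → α) = Fin.cons c (Fin.init w) := by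
  funext j
  cases j using Fin.cases <;> simp [Fin.init]

namespace Hochschild

variable {A E : Type*} {n : ℕ}

def face [Mul A] (i : ℕ) (a : Fin (n + 1) → A) : Fin n → A := fun j =>
  if (j : ℕ) < i then a (Fin.castSucc j)
  else if (j : ℕ) = i then a (Fin.castSucc j) * a j.succ
  else a j.succ

theorem face_zero_cons [Mul A] (c : A) (w : Fin (n + 1) → A) :
    face 0 (Fin.cons c w : Fin (n + 2) → A) = Fin.cons (c * w 0) (Fin.tail w) := by
  funext j
  cases j using Fin.cases <;> simp [face, Fin.tail]

theorem face_succ_cons [Mul A] (i : ℕ) (c : A) (w : Fin (n + 1) → A) :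
    face (i + 1) (Fin.cons c w : Fin (n + 2) → A) = Fin.cons c (face i w) := by
  funext j
  cases j using Fin.cases <;> simp [face]

variable [Ring A] [AddCommGroup E]

section Contraction

variable [Module A E] {ι : Type*} [Fintype ι]

def contraction (x y : ι → A) (g : (Fin (n + 1) → A) → E) (w : Fin n → A) : E :=
  ∑ i, x i • g (Fin.cons (y i) w)

@[simp]
theorem contraction_zero (x y : ι → A) :
    contraction x y (0 : (Fin (n + 1) → A) → E) = 0 := by
  funext
  simp [contraction]

theorem coe_sum_smul_curryLeft {k : Type*} [CommSemiring k] [Algebra k A] [Module k E]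
    [IsScalarTower k A E] (x y : ι → A) (f : MultilinearMap k (fun _ : Fin (n + 1) => A) E) :
    ⇑(∑ i, x i • f.curryLeft (y i)) = contraction x y f := by
  funext w
  simp [contraction]

end Contraction

variable [Module Aᵐᵒᵖ E]

/-- All terms of the coboundary but the first one `a 0 • f (a 1, …, a n)`; unlike that term,
they commute with the left action of `A` on cochains. -/
def coboundaryRest (n : ℕ) (f : (Fin n → A) → E) (a : Fin (n + 1) → A) : E :=
  ∑ i ∈ Finset.range n, (-1 : ℤ) ^ (i + 1) • f (face i a)
    + (-1 : ℤ) ^ (n + 1) • (MulOpposite.op (a (Fin.last n)) • f (Fin.init a))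

theorem coboundaryRest_cons (g : (Fin (n + 1) → A) → E) (c : A) (w : Fin (n + 1) → A) :
    coboundaryRest (n + 1) g (Fin.cons c w)
      = -g (Fin.cons (c * w 0) (Fin.tail w)) - coboundaryRest n (fun v => g (Fin.cons c v)) w := by
  simp only [coboundaryRest, Finset.sum_range_succ', face_succ_cons, face_zero_cons, Fin.init_cons,
    Fin.cons_last, pow_succ, mul_neg_one, neg_smul, Finset.sum_neg_distrib, pow_zero, one_smul]
  abel

variable [Module A E]

theorem hochschildCoboundary_apply (f : (Fin n → A) → E) (a : Fin (n + 1) → A) :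
    hochschildCoboundary n f a = a 0 • f (Fin.tail a) + coboundaryRest n f a :=
  add_assoc _ _ _

variable [SMulCommClass A Aᵐᵒᵖ E] {ι : Type*}

theorem coboundaryRest_sum_smul (s : Finset ι) (x : ι → A) (h : ι → (Fin n → A) → E)
    (a : Fin (n + 1) → A) :
    coboundaryRest n (fun v => ∑ i ∈ s, x i • h i v) a
      = ∑ i ∈ s, x i • coboundaryRest n (h i) a := by
  simp only [coboundaryRest, Finset.smul_sum, smul_add, Finset.sum_add_distrib, smul_comm (x _)]
  rw [Finset.sum_comm]

theorem coboundaryRest_contraction [Fintype ι] (x y : ι → A) (g : (Fin (n + 1) → A) → E)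
    (w : Fin (n + 1) → A) :
    coboundaryRest n (contraction x y g) w
      = ∑ i, x i • coboundaryRest n (fun v => g (Fin.cons (y i) v)) w :=
  coboundaryRest_sum_smul _ _ _ _

end Hochschild

namespace IsSeparabilityIdempotent

open Hochschild

variable {k A E ι : Type*} [CommSemiring k] [Ring A] [Algebra k A] [Fintype ι]
  [AddCommGroup E] [Module k E] [Module A E] [Module Aᵐᵒᵖ E] [SMulCommClass A Aᵐᵒᵖ E]
  [IsScalarTower k A E] {n : ℕ}

theorem hochschildCoboundary_contraction_add {x y : ι → A}
    (he : IsSeparabilityIdempotent k x y) (f : MultilinearMap k (fun _ : Fin (n + 1) => A) E) :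
    hochschildCoboundary n (contraction x y f) + contraction x y (hochschildCoboundary (n + 1) f)
      = f := by
  funext w
  set t := Fin.tail w
  let φ : A →ₗ[k] A →ₗ[k] E := LinearMap.mk₂ k (fun u v => u • f (Fin.cons v t))
    (fun _ _ _ => add_smul _ _ _) (fun _ _ _ => smul_assoc _ _ _)
    (fun _ _ _ => by simp only [MultilinearMap.cons_add, smul_add])
    (fun s u _ => by simp only [MultilinearMap.cons_smul]; exact smul_comm u s _)
  have h_sep :
      ∑ i, (w 0 * x i) • f (Fin.cons (y i) t) = ∑ i, x i • f (Fin.cons (y i * w 0) t) :=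
    he.sum_apply_mul_eq φ (w 0)
  have h_left : hochschildCoboundary n (contraction x y f) w
      = ∑ i, (w 0 * x i) • f (Fin.cons (y i) t)
        + ∑ i, x i • coboundaryRest n (fun v => f (Fin.cons (y i) v)) w := by
    rw [hochschildCoboundary_apply, coboundaryRest_contraction, contraction, Finset.smul_sum]
    simp only [smul_smul, t]
  have h_right : contraction x y (hochschildCoboundary (n + 1) f) w
      = f w - ∑ i, x i • f (Fin.cons (y i * w 0) t)
        - ∑ i, x i • coboundaryRest n (fun v => f (Fin.cons (y i) v)) w := by
    simp only [contraction, hochschildCoboundary_apply, Fin.cons_zero, Fin.tail_cons,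
      coboundaryRest_cons, smul_add, smul_sub, smul_neg, smul_smul, Finset.sum_add_distrib,
      Finset.sum_sub_distrib, Finset.sum_neg_distrib, ← Finset.sum_smul, he.sum_mul_eq_one,
      one_smul, t]
    abel
  rw [Pi.add_apply, h_left, h_right, h_sep]
  abel

end IsSeparabilityIdempotent

theorem hochschild_coboundary_surjective_general
    {k A E : Type*} [Field k] [CharZero k] [Ring A] [Algebra k A]
    [FiniteDimensional k A] [IsSemisimpleRing A]
    [AddCommGroup E] [Module k E] [Module A E] [Module Aᵐᵒᵖ E]
    [SMulCommClass A Aᵐᵒᵖ E] [IsScalarTower k A E]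
    (n : ℕ) (a : MultilinearMap k (fun _ : Fin (n + 1) => A) E)
    (hcoc : hochschildCoboundary (n + 1) ⇑a = 0) :
    ∃ b : MultilinearMap k (fun _ : Fin n => A) E,
      hochschildCoboundary n ⇑b = ⇑a := by
  let b := Module.finBasis k A
  have he := isSeparabilityIdempotent_traceDualBasis b
  refine ⟨∑ i, traceDualBasis b i • a.curryLeft (b i), ?_⟩
  have h := he.hochschildCoboundary_contraction_add a
  rwa [hcoc, Hochschild.contraction_zero, add_zero,
    ← Hochschild.coe_sum_smul_curryLeft (k := k)] at h

/-- Let `A` be a finite-dimensional semisimple algebra over a field of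
characteristic zero and `E` an `A`-bimodule.  Then for every `n ≥ 0` the Hochschild
coboundary map `Cⁿ(A,E) → Z^{n+1}(A,E)` is surjective: every multilinear
`(n+1)`-cocycle is the coboundary of a multilinear `n`-cochain.  Equivalently,
`H^{n+1}(A,E) = 0` for all `n ≥ 0`. -/
theorem hochschild_coboundary_surjective
    {k A E : Type*} [Field k] [CharZero k] [Ring A] [Algebra k A]
    [FiniteDimensional k A] [IsSemisimpleRing A]
    [AddCommGroup E] [Module k E] [Module A E] [Module Aᵐᵒᵖ E]
    [SMulCommClass A Aᵐᵒᵖ E] [IsScalarTower k A E] [IsScalarTower k Aᵐᵒᵖ E]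
    (n : ℕ) (a : MultilinearMap k (fun _ : Fin (n + 1) => A) E)
    (hcoc : hochschildCoboundary (n + 1) ⇑a = 0) :
    ∃ b : MultilinearMap k (fun _ : Fin n => A) E,
      hochschildCoboundary n ⇑b = ⇑a :=
  hochschild_coboundary_surjective_general n a hcoc
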